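/- Soundness of D-separation: let G be a finite DAG, W ⊆ vertices, and suppose Pr is the distribution induced by a Bayesian network on G in which each vertex of W has a {0,1}-valued CPT. If disjoint sets X and Y are d-separated by the functional closure Z* of Z in G, then X and Y are conditionally independent given Z under Pr. -/

import Mathlib

attribute [local instance] Classical.propDecidable

/-- `Act E Z a d b`: there is a `Z`-active (undirected) walk from `a` to `b` in the
digraph `E`, where `d` records whether the last edge points into `b`. -/
inductive Act {V : Type*} (E : V → V → Prop) (Z : Set V) : V → Bool → V → Prop where
  | into {a b : V} : E a b → Act E Z a true b
  | outof {a b : V} : E b a → Act E Z a false b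
  | step_out {a m c : V} {d : Bool} :
      Act E Z a d m → E m c → m ∉ Z → Act E Z a true c
  | step_in {a m c : V} {d : Bool} :
      Act E Z a d m → E c m →
      (d = true → ∃ w, Relation.ReflTransGen E m w ∧ w ∈ Z) →
      (d = false → m ∉ Z) → Act E Z a false c

def DSep {V : Type*} (E : V → V → Prop) (Z : Set V) (X Y : Set V) : Prop :=
  ∀ x ∈ X, ∀ y ∈ Y, ¬ ∃ d, Act E Z x d y

/-- The functional closure of `Z` with respect to the functional vertices `W`. -/
def fclosure {V : Type*} (E : V → V → Prop) (W : Set V) (Z : Set V) : Set V :=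
  ⋂₀ {C : Set V | Z ⊆ C ∧ ∀ w ∈ W, (∀ p, E p w → p ∈ C) → w ∈ C}

/-- Marginal of `Pr` over the variables in `A`. -/
noncomputable def marg {ι : Type*} [Fintype ι] [DecidableEq ι]
    {S : ι → Type*} [∀ i, Fintype (S i)]
    (Pr : (∀ i, S i) → ℝ) (A : Finset ι) (v : ∀ i, S i) : ℝ :=
  ∑ u : ∀ i, S i, if (∀ j ∈ A, u j = v j) then Pr u else 0

/-!
Two reductions. On the support of the joint distribution, the values on the functional closure
`Z*` are determined by those on `Z`: a vertex of `W` has a `{0,1}`-valued CPT, so once its parents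
are fixed exactly one of its values has positive weight. Hence independence given `Z*` implies
independence given `Z`.

Independence given `Z*` is the soundness of d-separation. Summing out the non-ancestors of
`X ∪ Y ∪ Z*` (a sink at a time) leaves the product of the ancestral CPTs. Split the ancestral
vertices outside `Z*` into those reachable from `X` by a `Z*`-active walk and the others: by the
definition of activity, no CPT family of an ancestral vertex meets both parts, so the ancestral
product factorizes into a factor not involving the second part and one not involving the first.
-/

open Finset Function

theorem dependsOn_prod {ι κ : Type*} {S : ι → Type*} {f : κ → (∀ i, S i) → ℝ} {A : Finset κ}
    {s : Set ι} (hf : ∀ k ∈ A, DependsOn (f k) s) : DependsOn (fun u => ∏ k ∈ A, f k u) s :=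
  fun _ _ h => prod_congr rfl fun k hk => hf k hk h

theorem sum_eq_sum_ite_sum_update {ι M : Type*} [DecidableEq ι] {S : ι → Type*}
    [Fintype (∀ i, S i)] [AddCommMonoid M] (m : ι) [Fintype (S m)] (c : S m)
    (g : (∀ i, S i) → M) :
    ∑ u, g u = ∑ u, if u m = c then ∑ x, g (update u m x) else 0 := by
  have fiber (x : S m) : ∑ u with u m = c, g (update u m x) = ∑ w with w m = x, g w :=
    sum_nbij' (update · m x) (update · m c) (by simp) (by simp)
      (fun u hu => by simp_all) (fun w hw => by simp_all) (fun _ _ => rfl)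
  calc ∑ u, g u = ∑ x, ∑ w with w m = x, g w := (sum_fiberwise _ _ _).symm
    _ = ∑ x, ∑ u with u m = c, g (update u m x) := by simp only [fiber]
    _ = ∑ u with u m = c, ∑ x, g (update u m x) := sum_comm
    _ = _ := sum_filter _ _

theorem subset_fclosure {V : Type*} (E : V → V → Prop) (W Z : Set V) : Z ⊆ fclosure E W Z :=
  fun _ hz => Set.mem_sInter.2 fun _ hC => hC.1 hz

theorem fclosure_subset {V : Type*} {E : V → V → Prop} {W Z C : Set V} (hZC : Z ⊆ C)
    (hC : ∀ w ∈ W, (∀ p, E p w → p ∈ C) → w ∈ C) : fclosure E W Z ⊆ C :=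
  Set.sInter_subset_of_mem ⟨hZC, hC⟩

theorem dependsOn_cpt {ι : Type*} {S : ι → Type*} {E : ι → ι → Prop}
    {F : (i : ι) → (∀ j, S j) → ℝ}
    (hloc : ∀ i v w, (∀ j, E j i → v j = w j) → v i = w i → F i v = F i w)
    {i : ι} {s : Set ι} (hi : i ∈ s) (hpa : ∀ j, E j i → j ∈ s) : DependsOn (F i) s :=
  fun _ _ h => hloc i _ _ (fun j hj => h j (hpa j hj)) (h i hi)

theorem exists_sink {ι : Type*} [Finite ι] {E : ι → ι → Prop}
    (hacyc : ∀ i, ¬ Relation.TransGen E i i) {B : Finset ι} (hB : B.Nonempty) :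
    ∃ m ∈ B, ∀ j ∈ B, ¬ E m j := by
  have : IsStrictOrder ι (flip (Relation.TransGen E)) :=
    { irrefl := hacyc, trans := fun _ _ _ h₁ h₂ => h₂.trans h₁ }
  obtain ⟨m, hm, hmin⟩ :=
    (Finite.wellFounded_of_trans_of_irrefl (flip (Relation.TransGen E))).has_min B hB
  exact ⟨m, hm, fun j hj hmj => hmin j hj (.single hmj)⟩

theorem eq_of_cpt_eq_one {ι : Type*} [DecidableEq ι] {S : ι → Type*} [∀ i, Fintype (S i)]
    {E : ι → ι → Prop} {F : (i : ι) → (∀ j, S j) → ℝ}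
    (hloc : ∀ i v w, (∀ j, E j i → v j = w j) → v i = w i → F i v = F i w)
    (hnn : ∀ i v, 0 ≤ F i v) (hsum : ∀ i v, ∑ x : S i, F i (Function.update v i x) = 1)
    {i : ι} {u w : ∀ j, S j} (hu : F i u = 1) (hw : F i w = 1) (hpa : ∀ j, E j i → u j = w j) :
    u i = w i := by
  by_contra hne
  have hu' : F i (update w i (u i)) = 1 := by
    rw [← hu]
    refine hloc i _ _ (fun j hj => ?_) (update_self ..)
    by_cases hji : j = i
    · subst hji
      exact update_self ..
    · rw [update_of_ne hji]
      exact (hpa j hj).symm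
  have hw' : F i (update w i (w i)) = 1 := by rwa [update_eq_self]
  have hle := sum_le_sum_of_subset_of_nonneg (subset_univ {u i, w i})
    fun x _ _ => hnn i (update w i x)
  rw [sum_pair hne, hu', hw', hsum i w] at hle
  norm_num at hle

section Marginal

variable {ι : Type*} [Fintype ι] [DecidableEq ι] {S : ι → Type*} [∀ i, Fintype (S i)]

def CondIndep (P : (∀ i, S i) → ℝ) (X Y Z : Finset ι) : Prop :=
  ∀ v, marg P (X ∪ Y ∪ Z) v * marg P Z v = marg P (X ∪ Z) v * marg P (Y ∪ Z) v

theorem marg_eq_sum_filter (P : (∀ i, S i) → ℝ) (A : Finset ι) (v : ∀ i, S i) :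
    marg P A v = ∑ u with ∀ j ∈ A, u j = v j, P u :=
  (sum_filter _ _).symm

theorem marg_congr {P : (∀ i, S i) → ℝ} {A B : Finset ι} {v w : ∀ i, S i}
    (h : ∀ u, P u ≠ 0 → ((∀ j ∈ A, u j = v j) ↔ ∀ j ∈ B, u j = w j)) :
    marg P A v = marg P B w := by
  refine sum_congr rfl fun u _ => ?_
  by_cases hu : P u = 0
  · simp [hu]
  · exact if_congr (h u hu) rfl rfl

theorem marg_eq_zero {P : (∀ i, S i) → ℝ} {A : Finset ι} {v : ∀ i, S i}
    (h : ∀ u, P u ≠ 0 → ¬ ∀ j ∈ A, u j = v j) : marg P A v = 0 := by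
  refine sum_eq_zero fun u _ => ?_
  by_cases hu : P u = 0
  · simp [hu]
  · exact if_neg (h u hu)

theorem marg_mul_eq_marg_insert {G f : (∀ i, S i) → ℝ} {m : ι} {C : Finset ι} (hm : m ∉ C)
    (hG : DependsOn G {m}ᶜ) (hf : ∀ u, ∑ x, f (update u m x) = 1) (v : ∀ i, S i) :
    marg (fun u => G u * f u) C v = marg G (insert m C) v := by
  have hC (u : ∀ i, S i) (x : S m) :
      (∀ j ∈ C, update u m x j = v j) ↔ ∀ j ∈ C, u j = v j := by
    refine forall₂_congr fun j hj => ?_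
    rw [update_of_ne (ne_of_mem_of_not_mem hj hm)]
  have hGu (u : ∀ i, S i) (x : S m) : G (update u m x) = G u :=
    hG fun j hj => update_of_ne hj _ _
  rw [marg, sum_eq_sum_ite_sum_update m (v m), marg]
  refine sum_congr rfl fun u _ => ?_
  simp only [hC, hGu, forall_mem_insert]
  by_cases hum : u m = v m
  · simp [hum, ← mul_sum, hf]
  · simp [hum]

theorem marg_mul_eq_mul_marg {φ ψ : (∀ i, S i) → ℝ} {T L R : Finset ι} (hLR : Disjoint L R)
    (hcov : ∀ j, j ∈ T ∨ j ∈ L ∨ j ∈ R) (hφ : DependsOn φ ↑(T ∪ L)) (hψ : DependsOn ψ ↑(T ∪ R))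
    (v : ∀ i, S i) :
    marg (fun u => φ u * ψ u) T v = marg φ (T ∪ R) v * marg ψ (T ∪ L) v := by
  have hLR' : ∀ j ∈ L, j ∉ R := fun j hj => disjoint_left.1 hLR hj
  simp only [marg_eq_sum_filter, sum_mul_sum, ← sum_product']
  symm
  refine sum_nbij' (fun p j => if j ∈ L then p.1 j else p.2 j)
    (fun u => (fun j => if j ∈ T ∪ R then v j else u j, fun j => if j ∈ T ∪ L then v j else u j))
    ?_ ?_ ?_ ?_ ?_
  all_goals
    intro p hp
    simp only [mem_product, mem_filter, mem_univ, true_and, mem_union] at hp ⊢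
  · intro j hj
    split_ifs <;> grind
  · constructor <;> intro j hj <;> split_ifs <;> grind
  · ext j <;> dsimp only <;> split_ifs <;> grind
  · ext j
    split_ifs <;> grind
  · congr 1
    · refine hφ fun j hj => ?_
      simp only [coe_union, Set.mem_union, mem_coe] at hj
      split_ifs <;> grind
    · refine hψ fun j hj => ?_
      simp only [coe_union, Set.mem_union, mem_coe] at hj
      split_ifs <;> grind

theorem condIndep_mul {φ ψ : (∀ i, S i) → ℝ} {X Y K L R : Finset ι} (hLR : Disjoint L R)
    (hcov : ∀ j, j ∈ K ∨ j ∈ L ∨ j ∈ R) (hφ : DependsOn φ ↑(L ∪ K)) (hψ : DependsOn ψ ↑(R ∪ K))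
    (hX : X ⊆ L ∪ K) (hY : Y ⊆ R ∪ K) :
    CondIndep (fun u => φ u * ψ u) X Y K := by
  intro v
  have split (C : Finset ι) (hKC : K ⊆ C) :
      marg (fun u => φ u * ψ u) C v = marg φ (C ∪ R) v * marg ψ (C ∪ L) v := by
    refine marg_mul_eq_mul_marg hLR (fun j => (hcov j).imp_left (@hKC j)) (hφ.mono ?_)
      (hψ.mono ?_) v <;> intro j <;> grind
  rw [split _ subset_union_right, split _ subset_rfl, split _ subset_union_right,
    split _ subset_union_right]
  have e₁ : X ∪ Y ∪ K ∪ R = X ∪ K ∪ R := by grind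
  have e₂ : X ∪ Y ∪ K ∪ L = Y ∪ K ∪ L := by grind
  have e₃ : X ∪ K ∪ L = K ∪ L := by grind
  have e₄ : Y ∪ K ∪ R = K ∪ R := by grind
  rw [e₁, e₂, e₃, e₄]
  ring

theorem condIndep_prod {f : ι → (∀ i, S i) → ℝ} {A X Y K L R : Finset ι} (hLR : Disjoint L R)
    (hcov : ∀ j, j ∈ K ∨ j ∈ L ∨ j ∈ R)
    (hf : ∀ i ∈ A, DependsOn (f i) ↑(L ∪ K) ∨ DependsOn (f i) ↑(R ∪ K))
    (hX : X ⊆ L ∪ K) (hY : Y ⊆ R ∪ K) :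
    CondIndep (fun u => ∏ i ∈ A, f i u) X Y K := by
  have hsplit : (fun u => ∏ i ∈ A, f i u) = fun u =>
      (∏ i ∈ A with DependsOn (f i) ↑(L ∪ K), f i u) *
        ∏ i ∈ A with ¬ DependsOn (f i) ↑(L ∪ K), f i u :=
    funext fun u => (prod_filter_mul_prod_filter_not _ _ _).symm
  rw [hsplit]
  refine condIndep_mul hLR hcov (dependsOn_prod fun i hi => (mem_filter.1 hi).2)
    (dependsOn_prod fun i hi => ?_) hX hY
  obtain ⟨hiA, hi⟩ := mem_filter.1 hi
  exact (hf i hiA).resolve_left hi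

theorem CondIndep.of_determined {P : (∀ i, S i) → ℝ} {X Y Z Q : Finset ι} (hZQ : Z ⊆ Q)
    (hdet : ∀ u w, P u ≠ 0 → P w ≠ 0 → (∀ j ∈ Z, u j = w j) → ∀ j ∈ Q, u j = w j)
    (h : CondIndep P X Y Q) : CondIndep P X Y Z := by
  intro v
  obtain ⟨u₀, hu₀, hu₀Z⟩ | hv := em (∃ u₀, P u₀ ≠ 0 ∧ ∀ j ∈ Z, u₀ j = v j)
  swap
  · have vanish (A : Finset ι) : marg P (A ∪ Z) v = 0 :=
      marg_eq_zero fun u hu huv => hv ⟨u, hu, fun j hj => huv j (mem_union_right _ hj)⟩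
    have hZ : marg P Z v = 0 := by simpa using vanish ∅
    simp [vanish, hZ]
  have hQ (u) (hu : P u ≠ 0) (huZ : ∀ j ∈ Z, u j = v j) : ∀ j ∈ Q, u j = u₀ j :=
    hdet u u₀ hu hu₀ fun j hj => (huZ j hj).trans (hu₀Z j hj).symm
  by_cases hXY : ∀ j ∈ X ∪ Y, j ∈ Q → u₀ j = v j
  · set v' : ∀ i, S i := fun j => if j ∈ Q then u₀ j else v j
    have hv' (j) (hj : j ∈ X ∪ Y ∪ Z) : v' j = v j := by
      by_cases hjQ : j ∈ Q
      · simp only [v', if_pos hjQ]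
        rcases mem_union.1 hj with hj | hj
        exacts [hXY j hj hjQ, hu₀Z j hj]
      · simp only [v', if_neg hjQ]
    have transfer (A : Finset ι) (hA : A ⊆ X ∪ Y) : marg P (A ∪ Z) v = marg P (A ∪ Q) v' := by
      refine marg_congr fun u hu => ⟨fun huv j hj => ?_, fun huv j hj => ?_⟩
      · by_cases hjQ : j ∈ Q
        · simp only [v', if_pos hjQ]
          exact hQ u hu (fun j hj => huv j (mem_union_right _ hj)) j hjQ
        · rw [hv' j (by grind)]
          exact huv j (by grind)
      · rw [← hv' j (by grind)]
        exact huv j (by grind)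
    have hZ : marg P Z v = marg P Q v' := by simpa using transfer ∅ (empty_subset _)
    rw [transfer _ subset_rfl, hZ, transfer _ subset_union_left, transfer _ subset_union_right]
    exact h v'
  · push Not at hXY
    obtain ⟨j, hj, hjQ, hjv⟩ := hXY
    have vanish (A : Finset ι) (hjA : j ∈ A) : marg P (A ∪ Z) v = 0 :=
      marg_eq_zero fun u hu huv => hjv <| by
        rw [← hQ u hu (fun k hk => huv k (mem_union_right _ hk)) j hjQ]
        exact huv j (mem_union_left _ hjA)
    rcases mem_union.1 hj with hjX | hjY
    · rw [vanish (X ∪ Y) hj, vanish X hjX]; ring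
    · rw [vanish (X ∪ Y) hj, vanish Y hjY]; ring

end Marginal

section BayesNet

variable {ι : Type*} [Fintype ι] [DecidableEq ι] {S : ι → Type*} [∀ i, Fintype (S i)]
  {E : ι → ι → Prop} {F : (i : ι) → (∀ j, S j) → ℝ}

theorem marg_mul_prod_eq_marg_union (hacyc : ∀ i, ¬ Relation.TransGen E i i)
    (hloc : ∀ i v w, (∀ j, E j i → v j = w j) → v i = w i → F i v = F i w)
    (hsum : ∀ i v, ∑ x : S i, F i (Function.update v i x) = 1)
    {H : (∀ i, S i) → ℝ} {B C : Finset ι} (hBC : Disjoint B C) (hH : DependsOn H ↑Bᶜ)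
    (v : ∀ i, S i) :
    marg (fun u => H u * ∏ i ∈ B, F i u) C v = marg H (C ∪ B) v := by
  induction B using Finset.strongInduction generalizing C with
  | H B ih =>
  obtain rfl | hB := B.eq_empty_or_nonempty
  · simp
  obtain ⟨m, hm, hsink⟩ := exists_sink hacyc hB
  have hrest : DependsOn (fun u => ∏ i ∈ B.erase m, F i u) {m}ᶜ :=
    dependsOn_prod fun i hi => dependsOn_cpt hloc (ne_of_mem_erase hi)
      fun j hji (hjm : j = m) => hsink i (mem_of_mem_erase hi) (hjm ▸ hji)
  have hHm : DependsOn H {m}ᶜ := hH.mono (by simpa using hm)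
  calc marg (fun u => H u * ∏ i ∈ B, F i u) C v
      = marg (fun u => (H u * ∏ i ∈ B.erase m, F i u) * F m u) C v := by
        congr 1
        ext u
        rw [← mul_prod_erase B _ hm]
        ring
    _ = marg (fun u => H u * ∏ i ∈ B.erase m, F i u) (insert m C) v :=
        marg_mul_eq_marg_insert (disjoint_left.1 hBC hm)
          (fun u w h => by simp only [hHm h, hrest h]) (hsum m) v
    _ = marg H (insert m C ∪ B.erase m) v :=
        ih _ (erase_ssubset hm) (by grind) (hH.mono (by simp))
    _ = marg H (C ∪ B) v := by
        congr 1
        grind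

theorem CondIndep.of_ancestral (hacyc : ∀ i, ¬ Relation.TransGen E i i)
    (hloc : ∀ i v w, (∀ j, E j i → v j = w j) → v i = w i → F i v = F i w)
    (hsum : ∀ i v, ∑ x : S i, F i (Function.update v i x) = 1)
    {A X Y Z : Finset ι} (hA : ∀ i ∈ A, ∀ j, E j i → j ∈ A) (hXYZ : X ∪ Y ∪ Z ⊆ A)
    (h : CondIndep (fun u => ∏ i ∈ A, F i u) X Y (Z ∪ Aᶜ)) :
    CondIndep (fun u => ∏ i, F i u) X Y Z := by
  intro v
  have hmarg (C : Finset ι) (hC : C ⊆ A) :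
      marg (fun u => ∏ i, F i u) C v = marg (fun u => ∏ i ∈ A, F i u) (C ∪ Aᶜ) v := by
    have hAc : DependsOn (fun u => ∏ i ∈ A, F i u) ↑Aᶜᶜ := by
      rw [compl_compl]
      exact dependsOn_prod fun i hi => dependsOn_cpt hloc hi (hA i hi)
    simpa only [prod_mul_prod_compl] using
      marg_mul_prod_eq_marg_union hacyc hloc hsum (disjoint_compl_left.mono_right hC) hAc v
  rw [hmarg _ hXYZ, hmarg _ (by grind), hmarg _ (by grind), hmarg _ (by grind)]
  simpa only [union_assoc] using h v

theorem eq_on_fclosure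
    (hloc : ∀ i v w, (∀ j, E j i → v j = w j) → v i = w i → F i v = F i w)
    (hnn : ∀ i v, 0 ≤ F i v) (hsum : ∀ i v, ∑ x : S i, F i (Function.update v i x) = 1)
    {W : Set ι} (hWfunc : ∀ w ∈ W, ∀ v, F w v = 0 ∨ F w v = 1) {Z : Set ι} {u w : ∀ i, S i}
    (hu : ∏ i, F i u ≠ 0) (hw : ∏ i, F i w ≠ 0) (huw : ∀ j ∈ Z, u j = w j) :
    ∀ j ∈ fclosure E W Z, u j = w j := by
  have one {v : ∀ i, S i} (hv : ∏ i, F i v ≠ 0) {i : ι} (hi : i ∈ W) : F i v = 1 :=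
    (hWfunc i hi v).resolve_left (prod_ne_zero_iff.1 hv i (mem_univ i))
  exact fclosure_subset (C := {j | u j = w j}) huw fun i hi hpa =>
    eq_of_cpt_eq_one hloc hnn hsum (one hu hi) (one hw hi) hpa

end BayesNet

section DSeparation

variable {V : Type*} {E : V → V → Prop} {Z X Y : Set V}

def ActReach (E : V → V → Prop) (Z X : Set V) (b : V) : Prop :=
  b ∈ X ∨ ∃ x ∈ X, ∃ d, Act E Z x d b

theorem Act.tail_of_reflTransGen {x i t : V} (hw : Act E Z x true i)
    (hit : Relation.ReflTransGen E i t) (hno : ∀ w, Relation.ReflTransGen E i w → w ∉ Z) :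
    Act E Z x true t := by
  induction hit with
  | refl => exact hw
  | tail hib hbc ih => exact Act.step_out ih hbc (hno _ hib)

theorem Act.of_reflTransGen {p t j : V} (hpt : Relation.ReflTransGen E p t)
    (hno : ∀ w, Relation.ReflTransGen E p w → w ∉ Z) (hjp : E j p) : Act E Z t false j := by
  induction hpt using Relation.ReflTransGen.head_induction_on generalizing j with
  | refl => exact Act.outof hjp
  | head hpc hct ih =>
    exact Act.step_in (ih (fun w hw => hno w (.head hpc hw)) hpc) hjp (by simp)
      fun _ => hno _ .refl

theorem actReach_of_collider {x i j t : V} (hsep : DSep E Z X Y) (ht : t ∈ X ∪ Y ∪ Z)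
    (hit : Relation.ReflTransGen E i t) (hx : x ∈ X) (hw : Act E Z x true i) (hji : E j i) :
    ActReach E Z X j := by
  by_cases hdesc : ∃ z, Relation.ReflTransGen E i z ∧ z ∈ Z
  · exact .inr ⟨x, hx, false, Act.step_in hw hji (fun _ => hdesc) (by simp)⟩
  have hno : ∀ z, Relation.ReflTransGen E i z → z ∉ Z := fun z hz hzZ => hdesc ⟨z, hz, hzZ⟩
  rcases ht with (htX | htY) | htZ
  · exact .inr ⟨t, htX, false, Act.of_reflTransGen hit hno hji⟩
  · exact absurd ⟨true, hw.tail_of_reflTransGen hit hno⟩ (hsep x hx t htY)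
  · exact absurd htZ (hno t hit)

theorem actReach_of_mem_family {i j k t : V} (hsep : DSep E Z X Y) (ht : t ∈ X ∪ Y ∪ Z)
    (hit : Relation.ReflTransGen E i t) (hk : k = i ∨ E k i) (hkR : ActReach E Z X k)
    (hkZ : k ∉ Z) (hj : j = i ∨ E j i) : ActReach E Z X j := by
  rcases hk with rfl | hki
  · rcases hj with rfl | hjk
    · exact hkR
    rcases hkR with hkX | ⟨x, hx, _ | _, hw⟩
    · exact .inr ⟨k, hkX, false, Act.outof hjk⟩
    · exact .inr ⟨x, hx, false, Act.step_in hw hjk (by simp) fun _ => hkZ⟩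
    · exact actReach_of_collider hsep ht hit hx hw hjk
  obtain ⟨x, hx, hw⟩ : ∃ x ∈ X, Act E Z x true i := by
    rcases hkR with hkX | ⟨x, hx, _, hw⟩
    exacts [⟨k, hkX, Act.into hki⟩, ⟨x, hx, Act.step_out hw hki hkZ⟩]
  rcases hj with rfl | hji
  · exact .inr ⟨x, hx, true, hw⟩
  · exact actReach_of_collider hsep ht hit hx hw hji

theorem family_actReach_or {i t : V} (hsep : DSep E Z X Y) (ht : t ∈ X ∪ Y ∪ Z)
    (hit : Relation.ReflTransGen E i t) :
    (∀ j, (j = i ∨ E j i) → j ∈ Z ∨ ActReach E Z X j) ∨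
      ∀ j, (j = i ∨ E j i) → j ∈ Z ∨ ¬ ActReach E Z X j := by
  rw [or_iff_not_imp_left]
  intro hL j hj
  push Not at hL
  obtain ⟨k, hk, hkZ, hkR⟩ := hL
  exact or_iff_not_imp_left.2 fun hjZ hjR =>
    hkR (actReach_of_mem_family hsep ht hit hj hjR hjZ hk)

end DSeparation

theorem condIndep_of_dSep {ι : Type*} [Fintype ι] [DecidableEq ι] {S : ι → Type*}
    [∀ i, Fintype (S i)] {E : ι → ι → Prop} {F : (i : ι) → (∀ j, S j) → ℝ}
    (hacyc : ∀ i, ¬ Relation.TransGen E i i)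
    (hloc : ∀ i v w, (∀ j, E j i → v j = w j) → v i = w i → F i v = F i w)
    (hsum : ∀ i v, ∑ x : S i, F i (Function.update v i x) = 1)
    {X Y Q : Finset ι} (hXY : Disjoint X Y) (hsep : DSep E ↑Q ↑X ↑Y) :
    CondIndep (fun u => ∏ i, F i u) X Y Q := by
  set An : Finset ι := univ.filter fun i => ∃ t ∈ X ∪ Y ∪ Q, Relation.ReflTransGen E i t
  have hAn : ∀ i ∈ An, ∀ j, E j i → j ∈ An := by
    simp only [An, mem_filter, mem_univ, true_and]
    exact fun i ⟨t, ht, hit⟩ j hji => ⟨t, ht, .head hji hit⟩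
  have hXYQ : X ∪ Y ∪ Q ⊆ An := fun t ht => mem_filter.2 ⟨mem_univ t, t, ht, .refl⟩
  set L := (An \ Q).filter (ActReach E ↑Q ↑X)
  set R := (An \ Q).filter (¬ ActReach E ↑Q ↑X ·)
  have hYR (y : ι) (hy : y ∈ Y) : ¬ ActReach E ↑Q ↑X y := by
    rintro (hyX | ⟨x, hx, d, hw⟩)
    exacts [disjoint_left.1 hXY hyX hy, hsep x hx y hy ⟨d, hw⟩]
  refine CondIndep.of_ancestral hacyc hloc hsum hAn hXYQ (condIndep_prod
    (disjoint_filter_filter_not (An \ Q) (An \ Q) (ActReach E ↑Q ↑X)) (fun j => ?_)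
    (fun i hi => ?_) (fun x hx => ?_) (fun y hy => ?_))
  · simp only [mem_union, mem_filter, mem_sdiff, mem_compl]
    tauto
  · obtain ⟨t, ht, hit⟩ := (mem_filter.1 hi).2
    have hfam {s : Finset ι} (hs : ∀ j, (j = i ∨ E j i) → j ∈ An → j ∈ s) :
        DependsOn (F i) ↑s := by
      have hfs (j) (hj : j = i ∨ E j i) : j ∈ s := by
        rcases hj with rfl | hji
        exacts [hs j (.inl rfl) hi, hs j (.inr hji) (hAn i hi j hji)]
      exact dependsOn_cpt hloc (hfs i (.inl rfl)) fun j hj => hfs j (.inr hj)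
    refine (family_actReach_or hsep (by simpa [or_assoc] using ht) hit).imp
      (fun h => hfam fun j hj hjAn => ?_) (fun h => hfam fun j hj hjAn => ?_)
    all_goals
      have := h j hj
      simp only [mem_coe, mem_union, mem_filter, mem_sdiff, mem_compl, hjAn] at this ⊢
      tauto
  · have hxAn : x ∈ An := hXYQ (by simp [hx])
    simp only [mem_union, mem_filter, mem_sdiff, hxAn, true_and]
    by_cases hxQ : x ∈ Q
    exacts [.inr (.inl hxQ), .inl ⟨hxQ, .inl hx⟩]
  · have hyAn : y ∈ An := hXYQ (by simp [hy])
    simp only [mem_union, mem_filter, mem_sdiff, hyAn, true_and]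
    by_cases hyQ : y ∈ Q
    exacts [.inr (.inl hyQ), .inl ⟨hyQ, hYR y hy⟩]

theorem funcDSep_sound_general
    {ι : Type*} [Fintype ι] [DecidableEq ι]
    {S : ι → Type*} [∀ i, Fintype (S i)]
    (E : ι → ι → Prop)
    (hacyc : ∀ i, ¬ Relation.TransGen E i i)
    (F : (i : ι) → (∀ j, S j) → ℝ)
    (hloc : ∀ i v w, (∀ j, E j i → v j = w j) → v i = w i → F i v = F i w)
    (hnn : ∀ i v, 0 ≤ F i v)
    (hsum : ∀ i v, ∑ x : S i, F i (Function.update v i x) = 1)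
    (W : Set ι)
    (hWfunc : ∀ w ∈ W, ∀ v, F w v = 0 ∨ F w v = 1)
    (X Y Z : Finset ι)
    (hXY : Disjoint X Y)
    (hsep : DSep E (fclosure E W (↑Z : Set ι)) (↑X : Set ι) (↑Y : Set ι)) :
    ∀ v : ∀ i, S i,
      marg (fun u => ∏ i, F i u) (X ∪ Y ∪ Z) v * marg (fun u => ∏ i, F i u) Z v
        = marg (fun u => ∏ i, F i u) (X ∪ Z) v * marg (fun u => ∏ i, F i u) (Y ∪ Z) v := by
  obtain ⟨Q, hQ⟩ : ∃ Q : Finset ι, ↑Q = fclosure E W ↑Z := (Set.toFinite _).exists_finset_coe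
  rw [← hQ] at hsep
  refine CondIndep.of_determined (coe_subset.1 (hQ ▸ subset_fclosure E W ↑Z))
    (fun u w hu hw huw j hj => ?_) (condIndep_of_dSep hacyc hloc hsum hXY hsep)
  exact eq_on_fclosure hloc hnn hsum hWfunc hu hw huw j (hQ ▸ mem_coe.2 hj)

/-- soundness of D-separation: if `Pr` is induced by a Bayesian
network on a finite DAG in which each vertex of `W` has a {0,1}-valued CPT, and the
disjoint sets `X` and `Y` are d-separated by the functional closure `Z*` of `Z`,
then `X` and `Y` are conditionally independent given `Z` under `Pr`. -/
theorem funcDSep_sound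
    {ι : Type*} [Fintype ι] [DecidableEq ι]
    {S : ι → Type*} [∀ i, Fintype (S i)] [∀ i, DecidableEq (S i)]
    (E : ι → ι → Prop)
    (hacyc : ∀ i, ¬ Relation.TransGen E i i)
    (F : (i : ι) → (∀ j, S j) → ℝ)
    (hloc : ∀ i v w, (∀ j, E j i → v j = w j) → v i = w i → F i v = F i w)
    (hnn : ∀ i v, 0 ≤ F i v)
    (hsum : ∀ i v, ∑ x : S i, F i (Function.update v i x) = 1)
    (W : Set ι)
    (hWfunc : ∀ w ∈ W, ∀ v, F w v = 0 ∨ F w v = 1)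
    (X Y Z : Finset ι)
    (hXY : Disjoint X Y) (hXZ : Disjoint X Z) (hYZ : Disjoint Y Z)
    (hsep : DSep E (fclosure E W (↑Z : Set ι)) (↑X : Set ι) (↑Y : Set ι)) :
    ∀ v : ∀ i, S i,
      marg (fun u => ∏ i, F i u) (X ∪ Y ∪ Z) v * marg (fun u => ∏ i, F i u) Z v
        = marg (fun u => ∏ i, F i u) (X ∪ Z) v * marg (fun u => ∏ i, F i u) (Y ∪ Z) v :=
  funcDSep_sound_general E hacyc F hloc hnn hsum W hWfunc X Y Z hXY hsep
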